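/- Let f = (x^8 − 17)^4 (x − 4)^2 (x − 8)^2 / 2^4 ∈ Int(Z). Then for every partition λ = (k_1, …, k_s) of 4 with λ ≠ (4), f has a factorization of type λ in Int(Z); explicitly, all of the following are factorizations of f into irreducible elements of Int(Z), with pairwise non-associated base factors in each line: f = (x^8−17)^3 · ((x^8−17)(x−4)^2(x−8)^2/2^4) [type (3,1)]; f = (x^8−17)^2 · ((x^8−17)(x−4)(x−8)/2^2)^2 [type (2,2)]; f = (x^8−17)^2 · ((x^8−17)(x−4)^2/2^2) · ((x^8−17)(x−8)^2/2^2) [type (2,1,1)]; f = ((x^8−17)(x−4)/2) · ((x^8−17)(x−8)/2) · ((x^8−17)(x−4)(x−8)/2^2) · (x^8−17) [type (1,1,1,1)]. -/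

import Mathlib

open Polynomial

noncomputable section

/-- The ring `Int(ℤ)` of integer-valued polynomials, as a subring of `ℚ[X]`. -/
def IntZ : Subring (Polynomial ℚ) where
  carrier := {f : Polynomial ℚ | ∀ n : ℤ, ∃ m : ℤ, f.eval (n : ℚ) = (m : ℚ)}
  zero_mem' := fun n => ⟨0, by simp⟩
  one_mem' := fun n => ⟨1, by simp⟩
  add_mem' := by
    rintro a b ha hb n
    obtain ⟨m₁, h₁⟩ := ha n
    obtain ⟨m₂, h₂⟩ := hb n
    exact ⟨m₁ + m₂, by simp [h₁, h₂]⟩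
  mul_mem' := by
    rintro a b ha hb n
    obtain ⟨m₁, h₁⟩ := ha n
    obtain ⟨m₂, h₂⟩ := hb n
    exact ⟨m₁ * m₂, by simp [h₁, h₂]⟩
  neg_mem' := by
    rintro a ha n
    obtain ⟨m, h⟩ := ha n
    exact ⟨-m, by simp [h]⟩

/-- Two (multisets of) factorizations are *essentially the same* if they can be matched up
so that corresponding factors are associated. -/
def EssentiallySame {R : Type*} [CommMonoid R] (s t : Multiset R) : Prop :=
  Multiset.Rel Associated s t

/-- An element `r` is *absolutely irreducible* if it is irreducible and for every `n > 1`
every factorization of `r ^ n` into irreducibles is essentially the same as `r ⋯ r`. -/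
def AbsolutelyIrreducible {R : Type*} [CommMonoid R] (r : R) : Prop :=
  Irreducible r ∧
    ∀ n : ℕ, 1 < n → ∀ s : Multiset R, (∀ a ∈ s, Irreducible a) →
      s.prod = r ^ n → EssentiallySame s (Multiset.replicate n r)

/-- The fixed divisor of `g ∈ ℤ[X]`: the ideal of `ℤ` generated by the values of `g`. -/
def fixdiv (g : Polynomial ℤ) : Ideal ℤ :=
  Ideal.span (Set.range fun a : ℤ => g.eval a)

/-- The canonical map `ℤ[X] → ℚ[X]`. -/
def toQ (g : Polynomial ℤ) : Polynomial ℚ :=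
  g.map (Int.castRingHom ℚ)

/-- `f = (x⁸−17)⁴(x−4)²(x−8)²/2⁴`. -/
def f19 : Polynomial ℚ :=
  Polynomial.C (((2 : ℚ) ^ 4))⁻¹ *
    toQ ((X ^ 8 - Polynomial.C 17) ^ 4 * (X - Polynomial.C 4) ^ 2 * (X - Polynomial.C 8) ^ 2)

/-- `x⁸−17`. -/
def A19 : Polynomial ℚ := toQ (X ^ 8 - Polynomial.C 17)

/-- `(x⁸−17)(x−4)²(x−8)²/2⁴`. -/
def B19 : Polynomial ℚ :=
  Polynomial.C (((2 : ℚ) ^ 4))⁻¹ *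
    toQ ((X ^ 8 - Polynomial.C 17) * (X - Polynomial.C 4) ^ 2 * (X - Polynomial.C 8) ^ 2)

/-- `(x⁸−17)(x−4)(x−8)/2²`. -/
def C19 : Polynomial ℚ :=
  Polynomial.C (((2 : ℚ) ^ 2))⁻¹ *
    toQ ((X ^ 8 - Polynomial.C 17) * (X - Polynomial.C 4) * (X - Polynomial.C 8))

/-- `(x⁸−17)(x−4)²/2²`. -/
def D19 : Polynomial ℚ :=
  Polynomial.C (((2 : ℚ) ^ 2))⁻¹ *
    toQ ((X ^ 8 - Polynomial.C 17) * (X - Polynomial.C 4) ^ 2)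

/-- `(x⁸−17)(x−8)²/2²`. -/
def E19 : Polynomial ℚ :=
  Polynomial.C (((2 : ℚ) ^ 2))⁻¹ *
    toQ ((X ^ 8 - Polynomial.C 17) * (X - Polynomial.C 8) ^ 2)

/-- `(x⁸−17)(x−4)/2`. -/
def F19 : Polynomial ℚ :=
  Polynomial.C ((2 : ℚ))⁻¹ * toQ ((X ^ 8 - Polynomial.C 17) * (X - Polynomial.C 4))

/-- `(x⁸−17)(x−8)/2`. -/
def G19 : Polynomial ℚ :=
  Polynomial.C ((2 : ℚ))⁻¹ * toQ ((X ^ 8 - Polynomial.C 17) * (X - Polynomial.C 8))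

/-! ### Auxiliary development -/

private def pP : Polynomial ℚ := X ^ 8 - Polynomial.C 17
private def qP : Polynomial ℚ := X - Polynomial.C 4
private def rP : Polynomial ℚ := X - Polynomial.C 8

private lemma ZP_monic : (X ^ 8 - Polynomial.C 17 : Polynomial ℤ).Monic :=
  monic_X_pow_sub_C _ (by norm_num)

private lemma ZP_degree : (X ^ 8 - Polynomial.C 17 : Polynomial ℤ).degree = 8 :=
  degree_X_pow_sub_C (by norm_num) _

private lemma ZP_irred : Irreducible ((X ^ 8 - Polynomial.C 17 : Polynomial ℤ)) := by
  have h17 : Prime (17 : ℤ) := by norm_num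
  apply irreducible_of_eisenstein_criterion (P := Ideal.span {17})
  · rwa [Ideal.span_singleton_prime (by norm_num)]
  · rw [ZP_monic.leadingCoeff, Ideal.mem_span_singleton]
    norm_num
  · intro n hn
    rw [ZP_degree] at hn
    have hn8 : n < 8 := by exact_mod_cast hn
    rw [Ideal.mem_span_singleton]
    interval_cases n <;> simp [coeff_sub, coeff_X_pow]
  · rw [ZP_degree]; norm_num
  · rw [Ideal.span_singleton_pow, Ideal.mem_span_singleton]
    norm_num
  · exact ZP_monic.isPrimitive

private lemma pP_irred : Irreducible pP := by
  have := (ZP_monic.irreducible_iff_irreducible_map_fraction_map (K := ℚ)).mp ZP_irred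
  have e : pP = (X ^ 8 - Polynomial.C 17 : Polynomial ℤ).map (algebraMap ℤ ℚ) := by
    simp only [pP, Polynomial.map_sub, Polynomial.map_pow, Polynomial.map_X, map_C]
    norm_num [map_ofNat]
  rwa [e]

private lemma pP_prime : Prime pP := pP_irred.prime
private lemma qP_prime : Prime qP := prime_X_sub_C 4
private lemma rP_prime : Prime rP := prime_X_sub_C 8

private lemma pP_monic : pP.Monic := monic_X_pow_sub_C _ (by norm_num)
private lemma qP_monic : qP.Monic := monic_X_sub_C 4
private lemma rP_monic : rP.Monic := monic_X_sub_C 8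

private lemma M_monic (i j l : ℕ) : (pP ^ i * (qP ^ j * rP ^ l)).Monic :=
  (pP_monic.pow i).mul ((qP_monic.pow j).mul (rP_monic.pow l))

private lemma M_natDegree (i j l : ℕ) : (pP ^ i * (qP ^ j * rP ^ l)).natDegree = 8 * i + j + l := by
  rw [(pP_monic.pow i).natDegree_mul ((qP_monic.pow j).mul (rP_monic.pow l)),
    (qP_monic.pow j).natDegree_mul (rP_monic.pow l),
    pP_monic.natDegree_pow, qP_monic.natDegree_pow, rP_monic.natDegree_pow]
  have h1 : pP.natDegree = 8 := natDegree_X_pow_sub_C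
  have h2 : qP.natDegree = 1 := natDegree_X_sub_C 4
  have h3 : rP.natDegree = 1 := natDegree_X_sub_C 8
  rw [h1, h2, h3]; ring

private lemma CM_natDegree (c : ℚ) (hc : c ≠ 0) (i j l : ℕ) :
    (Polynomial.C c * (pP ^ i * (qP ^ j * rP ^ l))).natDegree = 8 * i + j + l := by
  rw [natDegree_C_mul hc, M_natDegree]

private lemma assoc_pow {s : Polynomial ℚ} {t : Polynomial ℚ} (h : Associated s t) :
    ∃ c : ℚ, c ≠ 0 ∧ s = Polynomial.C c * t := by
  obtain ⟨u, hu⟩ := h.symm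
  obtain ⟨c, hc, hcu⟩ := Polynomial.isUnit_iff.mp u.isUnit
  exact ⟨c, hc.ne_zero, by rw [← hu, ← hcu]; ring⟩

private lemma classify {J L : ℕ} {g : Polynomial ℚ} (hdvd : g ∣ pP ^ 1 * (qP ^ J * rP ^ L)) :
    ∃ i j l : ℕ, i ≤ 1 ∧ j ≤ J ∧ l ≤ L ∧
      ∃ c : ℚ, c ≠ 0 ∧ g = Polynomial.C c * (pP ^ i * (qP ^ j * rP ^ l)) := by
  obtain ⟨d1, d2, hd1, hd2, rfl⟩ := exists_dvd_and_dvd_of_dvd_mul hdvd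
  obtain ⟨d3, d4, hd3, hd4, rfl⟩ := exists_dvd_and_dvd_of_dvd_mul hd2
  obtain ⟨i, hi, hia⟩ := (dvd_prime_pow pP_prime 1).mp hd1
  obtain ⟨j, hj, hja⟩ := (dvd_prime_pow qP_prime J).mp hd3
  obtain ⟨l, hl, hla⟩ := (dvd_prime_pow rP_prime L).mp hd4
  obtain ⟨c1, hc1, e1⟩ := assoc_pow hia
  obtain ⟨c2, hc2, e2⟩ := assoc_pow hja
  obtain ⟨c3, hc3, e3⟩ := assoc_pow hla
  exact ⟨i, j, l, hi, hj, hl, c1 * c2 * c3, by positivity,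
    by rw [e1, e2, e3, C_mul, C_mul]; ring⟩

/-- Membership helper. -/
private lemma mem_helper (d : ℤ) (hd : d ≠ 0) (g : Polynomial ℤ)
    (hdvd : ∀ n : ℤ, d ∣ g.eval n) :
    Polynomial.C ((d : ℚ))⁻¹ * toQ g ∈ IntZ := by
  intro n
  obtain ⟨m, hm⟩ := hdvd n
  refine ⟨m, ?_⟩
  have he : (toQ g).eval ((n : ℤ) : ℚ) = ((g.eval n : ℤ) : ℚ) := by
    simp [toQ, Polynomial.eval_intCast_map]
  rw [eval_mul, eval_C, he, hm]
  have hdq : (d : ℚ) ≠ 0 := Int.cast_ne_zero.mpr hd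
  push_cast
  field_simp

private lemma zmod_case (d : ℕ) [NeZero d] (v : ℤ) (h : (v : ZMod d) = 0) : (d : ℤ) ∣ v :=
  (ZMod.intCast_zmod_eq_zero_iff_dvd _ _).mp h

private lemma dvd_f (n : ℤ) :
    (16 : ℤ) ∣ ((X ^ 8 - Polynomial.C 17) ^ 4 * (X - Polynomial.C 4) ^ 2 *
      (X - Polynomial.C 8) ^ 2 : Polynomial ℤ).eval n := by
  have h : ∀ x : ZMod 16, (x ^ 8 - 17) ^ 4 * (x - 4) ^ 2 * (x - 8) ^ 2 = 0 := by decide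
  have he : ((X ^ 8 - Polynomial.C 17) ^ 4 * (X - Polynomial.C 4) ^ 2 *
      (X - Polynomial.C 8) ^ 2 : Polynomial ℤ).eval n
      = (n ^ 8 - 17) ^ 4 * (n - 4) ^ 2 * (n - 8) ^ 2 := by simp
  rw [he]
  apply zmod_case
  push_cast
  exact h _

private lemma dvd_B (n : ℤ) :
    (16 : ℤ) ∣ ((X ^ 8 - Polynomial.C 17) * (X - Polynomial.C 4) ^ 2 *
      (X - Polynomial.C 8) ^ 2 : Polynomial ℤ).eval n := by
  have h : ∀ x : ZMod 16, (x ^ 8 - 17) * (x - 4) ^ 2 * (x - 8) ^ 2 = 0 := by decide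
  have he : ((X ^ 8 - Polynomial.C 17) * (X - Polynomial.C 4) ^ 2 *
      (X - Polynomial.C 8) ^ 2 : Polynomial ℤ).eval n
      = (n ^ 8 - 17) * (n - 4) ^ 2 * (n - 8) ^ 2 := by simp
  rw [he]
  apply zmod_case
  push_cast
  exact h _

private lemma dvd_C (n : ℤ) :
    (4 : ℤ) ∣ ((X ^ 8 - Polynomial.C 17) * (X - Polynomial.C 4) *
      (X - Polynomial.C 8) : Polynomial ℤ).eval n := by
  have h : ∀ x : ZMod 4, (x ^ 8 - 17) * (x - 4) * (x - 8) = 0 := by decide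
  have he : ((X ^ 8 - Polynomial.C 17) * (X - Polynomial.C 4) *
      (X - Polynomial.C 8) : Polynomial ℤ).eval n
      = (n ^ 8 - 17) * (n - 4) * (n - 8) := by simp
  rw [he]
  apply zmod_case
  push_cast
  exact h _

private lemma dvd_D (n : ℤ) :
    (4 : ℤ) ∣ ((X ^ 8 - Polynomial.C 17) * (X - Polynomial.C 4) ^ 2 : Polynomial ℤ).eval n := by
  have h : ∀ x : ZMod 4, (x ^ 8 - 17) * (x - 4) ^ 2 = 0 := by decide
  have he : ((X ^ 8 - Polynomial.C 17) * (X - Polynomial.C 4) ^ 2 : Polynomial ℤ).eval n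
      = (n ^ 8 - 17) * (n - 4) ^ 2 := by simp
  rw [he]
  apply zmod_case
  push_cast
  exact h _

private lemma dvd_E (n : ℤ) :
    (4 : ℤ) ∣ ((X ^ 8 - Polynomial.C 17) * (X - Polynomial.C 8) ^ 2 : Polynomial ℤ).eval n := by
  have h : ∀ x : ZMod 4, (x ^ 8 - 17) * (x - 8) ^ 2 = 0 := by decide
  have he : ((X ^ 8 - Polynomial.C 17) * (X - Polynomial.C 8) ^ 2 : Polynomial ℤ).eval n
      = (n ^ 8 - 17) * (n - 8) ^ 2 := by simp
  rw [he]
  apply zmod_case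
  push_cast
  exact h _

private lemma dvd_F (n : ℤ) :
    (2 : ℤ) ∣ ((X ^ 8 - Polynomial.C 17) * (X - Polynomial.C 4) : Polynomial ℤ).eval n := by
  have h : ∀ x : ZMod 2, (x ^ 8 - 17) * (x - 4) = 0 := by decide
  have he : ((X ^ 8 - Polynomial.C 17) * (X - Polynomial.C 4) : Polynomial ℤ).eval n
      = (n ^ 8 - 17) * (n - 4) := by simp
  rw [he]
  apply zmod_case
  push_cast
  exact h _

private lemma dvd_G (n : ℤ) :
    (2 : ℤ) ∣ ((X ^ 8 - Polynomial.C 17) * (X - Polynomial.C 8) : Polynomial ℤ).eval n := by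
  have h : ∀ x : ZMod 2, (x ^ 8 - 17) * (x - 8) = 0 := by decide
  have he : ((X ^ 8 - Polynomial.C 17) * (X - Polynomial.C 8) : Polynomial ℤ).eval n
      = (n ^ 8 - 17) * (n - 8) := by simp
  rw [he]
  apply zmod_case
  push_cast
  exact h _

private lemma hf_mem : f19 ∈ IntZ := by
  have h := mem_helper 16 (by norm_num)
    ((X ^ 8 - Polynomial.C 17) ^ 4 * (X - Polynomial.C 4) ^ 2 * (X - Polynomial.C 8) ^ 2)
    dvd_f
  have : ((16 : ℤ) : ℚ)⁻¹ = (((2:ℚ)^4))⁻¹ := by norm_num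
  rw [this] at h
  exact h

private lemma hB_mem : B19 ∈ IntZ := by
  have h := mem_helper 16 (by norm_num)
    ((X ^ 8 - Polynomial.C 17) * (X - Polynomial.C 4) ^ 2 * (X - Polynomial.C 8) ^ 2)
    dvd_B
  have : ((16 : ℤ) : ℚ)⁻¹ = (((2:ℚ)^4))⁻¹ := by norm_num
  rw [this] at h
  exact h

private lemma hC_mem : C19 ∈ IntZ := by
  have h := mem_helper 4 (by norm_num)
    ((X ^ 8 - Polynomial.C 17) * (X - Polynomial.C 4) * (X - Polynomial.C 8))
    dvd_C
  have : ((4 : ℤ) : ℚ)⁻¹ = (((2:ℚ)^2))⁻¹ := by norm_num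
  rw [this] at h
  exact h

private lemma hD_mem : D19 ∈ IntZ := by
  have h := mem_helper 4 (by norm_num)
    ((X ^ 8 - Polynomial.C 17) * (X - Polynomial.C 4) ^ 2)
    dvd_D
  have : ((4 : ℤ) : ℚ)⁻¹ = (((2:ℚ)^2))⁻¹ := by norm_num
  rw [this] at h
  exact h

private lemma hE_mem : E19 ∈ IntZ := by
  have h := mem_helper 4 (by norm_num)
    ((X ^ 8 - Polynomial.C 17) * (X - Polynomial.C 8) ^ 2)
    dvd_E
  have : ((4 : ℤ) : ℚ)⁻¹ = (((2:ℚ)^2))⁻¹ := by norm_num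
  rw [this] at h
  exact h

private lemma hF_mem : F19 ∈ IntZ := by
  have h := mem_helper 2 (by norm_num)
    ((X ^ 8 - Polynomial.C 17) * (X - Polynomial.C 4))
    dvd_F
  have : ((2 : ℤ) : ℚ)⁻¹ = ((2:ℚ))⁻¹ := by norm_num
  rw [this] at h
  exact h

private lemma hG_mem : G19 ∈ IntZ := by
  have h := mem_helper 2 (by norm_num)
    ((X ^ 8 - Polynomial.C 17) * (X - Polynomial.C 8))
    dvd_G
  have : ((2 : ℤ) : ℚ)⁻¹ = ((2:ℚ))⁻¹ := by norm_num
  rw [this] at h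
  exact h

private lemma hA_mem : A19 ∈ IntZ := by
  have h := mem_helper 1 (by norm_num)
    (X ^ 8 - Polynomial.C 17)
    (fun n => one_dvd _)
  have : Polynomial.C (((1 : ℤ) : ℚ))⁻¹ * toQ (X ^ 8 - Polynomial.C 17)
      = A19 := by
    simp [A19]
  rwa [this] at h

private lemma f19_eq : f19 = Polynomial.C (((2:ℚ)^4))⁻¹ * (pP ^ 4 * (qP ^ 2 * rP ^ 2)) := by
  unfold f19
  congr 1
  simp only [toQ, Polynomial.map_mul, Polynomial.map_pow, Polynomial.map_sub, Polynomial.map_X,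
    Polynomial.map_C, pP, qP, rP]
  norm_num [map_ofNat]
  ring

private lemma A19_eq : A19 = Polynomial.C (((2:ℚ)^0))⁻¹ * (pP ^ 1 * (qP ^ 0 * rP ^ 0)) := by
  unfold A19
  simp only [toQ, Polynomial.map_sub, Polynomial.map_pow, Polynomial.map_X,
    Polynomial.map_C, pP, qP, rP]
  norm_num [map_ofNat]

private lemma B19_eq : B19 = Polynomial.C (((2:ℚ)^4))⁻¹ * (pP ^ 1 * (qP ^ 2 * rP ^ 2)) := by
  unfold B19
  congr 1
  simp only [toQ, Polynomial.map_mul, Polynomial.map_pow, Polynomial.map_sub, Polynomial.map_X,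
    Polynomial.map_C, pP, qP, rP]
  norm_num [map_ofNat]
  ring

private lemma C19_eq : C19 = Polynomial.C (((2:ℚ)^2))⁻¹ * (pP ^ 1 * (qP ^ 1 * rP ^ 1)) := by
  unfold C19
  congr 1
  simp only [toQ, Polynomial.map_mul, Polynomial.map_pow, Polynomial.map_sub, Polynomial.map_X,
    Polynomial.map_C, pP, qP, rP]
  norm_num [map_ofNat]
  ring

private lemma D19_eq : D19 = Polynomial.C (((2:ℚ)^2))⁻¹ * (pP ^ 1 * (qP ^ 2 * rP ^ 0)) := by
  unfold D19
  congr 1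
  simp only [toQ, Polynomial.map_mul, Polynomial.map_pow, Polynomial.map_sub, Polynomial.map_X,
    Polynomial.map_C, pP, qP, rP]
  norm_num [map_ofNat]

private lemma E19_eq : E19 = Polynomial.C (((2:ℚ)^2))⁻¹ * (pP ^ 1 * (qP ^ 0 * rP ^ 2)) := by
  unfold E19
  congr 1
  simp only [toQ, Polynomial.map_mul, Polynomial.map_pow, Polynomial.map_sub, Polynomial.map_X,
    Polynomial.map_C, pP, qP, rP]
  norm_num [map_ofNat]

private lemma F19_eq : F19 = Polynomial.C (((2:ℚ)^1))⁻¹ * (pP ^ 1 * (qP ^ 1 * rP ^ 0)) := by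
  unfold F19
  simp only [toQ, Polynomial.map_mul, Polynomial.map_pow, Polynomial.map_sub, Polynomial.map_X,
    Polynomial.map_C, pP, qP, rP]
  norm_num [map_ofNat]

private lemma G19_eq : G19 = Polynomial.C (((2:ℚ)^1))⁻¹ * (pP ^ 1 * (qP ^ 0 * rP ^ 1)) := by
  unfold G19
  simp only [toQ, Polynomial.map_mul, Polynomial.map_pow, Polynomial.map_sub, Polynomial.map_X,
    Polynomial.map_C, pP, qP, rP]
  norm_num [map_ofNat]

private lemma isUnit_of_val_C (z : IntZ) (c : ℚ) (hz : (z : Polynomial ℚ) = Polynomial.C c)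
    (hc : c = 1 ∨ c = -1) : IsUnit z := by
  refine IsUnit.of_mul_eq_one z (Subtype.ext ?_)
  have : ((z * z : IntZ) : Polynomial ℚ) = (z : Polynomial ℚ) * (z : Polynomial ℚ) := rfl
  rw [this, hz, ← C_mul]
  rcases hc with h | h <;> rw [h] <;> norm_num

private lemma const_isUnit {T : Polynomial ℚ} (hT : T ∈ IntZ) {x y : IntZ}
    (hxy : (⟨T, hT⟩ : IntZ) = x * y) {c : ℚ} (hy : (y : Polynomial ℚ) = Polynomial.C c)
    {n1 n2 N1 N2 : ℤ} (hv1 : T.eval ((n1 : ℤ) : ℚ) = ((N1 : ℤ) : ℚ))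
    (hv2 : T.eval ((n2 : ℤ) : ℚ) = ((N2 : ℤ) : ℚ))
    (hcop : IsCoprime N1 N2) : IsUnit y := by
  obtain ⟨m, hm⟩ := y.2 0
  rw [hy, eval_C] at hm
  obtain ⟨m1, hm1⟩ := x.2 n1
  obtain ⟨m2, hm2⟩ := x.2 n2
  have hTe : T = (x : Polynomial ℚ) * (y : Polynomial ℚ) := congrArg Subtype.val hxy
  have e1 : N1 = m1 * m := by
    have : ((N1 : ℤ) : ℚ) = ((m1 * m : ℤ) : ℚ) := by
      rw [← hv1, hTe, eval_mul, hm1, hy, eval_C, hm]; push_cast; ring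
    exact_mod_cast this
  have e2 : N2 = m2 * m := by
    have : ((N2 : ℤ) : ℚ) = ((m2 * m : ℤ) : ℚ) := by
      rw [← hv2, hTe, eval_mul, hm2, hy, eval_C, hm]; push_cast; ring
    exact_mod_cast this
  have d1 : m ∣ N1 := e1 ▸ Dvd.intro_left m1 rfl
  have d2 : m ∣ N2 := e2 ▸ Dvd.intro_left m2 rfl
  have hu : IsUnit m := hcop.isUnit_of_dvd' d1 d2
  apply isUnit_of_val_C y c hy
  rcases Int.isUnit_iff.mp hu with h | h
  · left; rw [hm, h]; norm_num
  · right; rw [hm, h]; norm_num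

private lemma dyadic_contra (v : ℕ) (c1 c2 : ℚ) {g1 g2 : Polynomial ℚ}
    (h1 : g1 ∈ IntZ) (h2 : g2 ∈ IntZ) (V1 V2 : ℤ) (n1 n2 : ℤ)
    (e1 : g1.eval ((n1 : ℤ) : ℚ) = c1 * ((V1 : ℤ) : ℚ))
    (e2 : g2.eval ((n2 : ℤ) : ℚ) = c2 * ((V2 : ℤ) : ℚ))
    (hc : c1 * c2 * 2 ^ v = 1)
    (hnd : ¬ ((2 : ℤ) ^ v ∣ V1 * V2)) : False := by
  obtain ⟨m1, hm1⟩ := h1 n1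
  obtain ⟨m2, hm2⟩ := h2 n2
  apply hnd
  refine ⟨m1 * m2, ?_⟩
  have hm1' : (m1 : ℚ) = c1 * V1 := by rw [← hm1, e1]
  have hm2' : (m2 : ℚ) = c2 * V2 := by rw [← hm2, e2]
  have : ((V1 : ℤ) : ℚ) * ((V2 : ℤ) : ℚ) = (2 : ℚ) ^ v * ((m1 : ℚ) * (m2 : ℚ)) := by
    rw [hm1', hm2']
    linear_combination (-((V1 : ℚ) * V2)) * hc
  exact_mod_cast this

private lemma M_eval (c x : ℚ) (i j l : ℕ) :
    (Polynomial.C c * (pP ^ i * (qP ^ j * rP ^ l))).eval x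
      = c * ((x ^ 8 - 17) ^ i * ((x - 4) ^ j * (x - 8) ^ l)) := by
  simp [pP, qP, rP]

private lemma main_irred (J L : ℕ) (T : Polynomial ℚ) (hT : T ∈ IntZ)
    (hTeq : T = Polynomial.C (((2:ℚ) ^ (J + L)))⁻¹ * (pP ^ 1 * (qP ^ J * rP ^ L)))
    (n1 n2 N1 N2 : ℤ) (hv1 : T.eval ((n1 : ℤ) : ℚ) = ((N1 : ℤ) : ℚ))
    (hv2 : T.eval ((n2 : ℤ) : ℚ) = ((N2 : ℤ) : ℚ)) (hcop : IsCoprime N1 N2)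
    (hdyad : ∀ j l : ℕ, j ≤ J → l ≤ L → j + l < J + L →
      ¬ ((2 : ℤ) ^ (J + L) ∣ (1679599 * 2 ^ j * (-2) ^ l) * ((-3) ^ (J - j) * (-7) ^ (L - l)))) :
    Irreducible (⟨T, hT⟩ : IntZ) := by
  obtain ⟨e0, he0⟩ : ∃ e0 : ℚ, e0 = (((2:ℚ) ^ (J + L)))⁻¹ := ⟨_, rfl⟩
  rw [← he0] at hTeq
  have he0ne : e0 ≠ 0 := by rw [he0]; positivity
  constructor
  · intro hu
    have hu2 : IsUnit T := hu.map IntZ.subtype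
    have hdeg := Polynomial.natDegree_eq_zero_of_isUnit hu2
    rw [hTeq, CM_natDegree _ he0ne] at hdeg
    omega
  · rintro x y hxy
    have hTe : T = (x : Polynomial ℚ) * (y : Polynomial ℚ) := congrArg Subtype.val hxy
    have hone0 : Polynomial.C e0⁻¹ * Polynomial.C e0 = 1 := by
      rw [← C_mul, inv_mul_cancel₀ he0ne, C_1]
    have hdvd : (x : Polynomial ℚ) ∣ pP ^ 1 * (qP ^ J * rP ^ L) := by
      refine ⟨Polynomial.C e0⁻¹ * (y : Polynomial ℚ), ?_⟩
      have h1 : pP ^ 1 * (qP ^ J * rP ^ L) = Polynomial.C e0⁻¹ * T := by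
        rw [hTeq]
        linear_combination (pP ^ 1 * (qP ^ J * rP ^ L)) * hone0.symm
      rw [h1, hTe]; ring
    obtain ⟨i, j, l, hi, hj, hl, cx, hcx, hxv⟩ := classify hdvd
    obtain ⟨i', hsi⟩ : ∃ i', i + i' = 1 := ⟨1 - i, by omega⟩
    obtain ⟨j', hsj⟩ : ∃ j', j + j' = J := ⟨J - j, by omega⟩
    obtain ⟨l', hsl⟩ : ∃ l', l + l' = L := ⟨L - l, by omega⟩
    have hxne : (x : Polynomial ℚ) ≠ 0 := by
      rw [hxv]; exact mul_ne_zero (C_ne_zero.mpr hcx) (M_monic i j l).ne_zero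
    have hone : Polynomial.C cx * Polynomial.C cx⁻¹ = 1 := by
      rw [← C_mul, mul_inv_cancel₀ hcx, C_1]
    have hyv : (y : Polynomial ℚ)
        = Polynomial.C (e0 * cx⁻¹) * (pP ^ i' * (qP ^ j' * rP ^ l')) := by
      apply mul_left_cancel₀ hxne
      rw [← hTe, hTeq, hxv, ← hsi, ← hsj, ← hsl, C_mul]
      rw [pow_add pP, pow_add qP, pow_add rP]
      linear_combination (-(Polynomial.C e0 *
        (pP ^ i * (qP ^ j * rP ^ l)) * (pP ^ i' * (qP ^ j' * rP ^ l')))) * hone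
    by_cases hxconst : i = 0 ∧ j = 0 ∧ l = 0
    · left
      obtain ⟨rfl, rfl, rfl⟩ := hxconst
      have hxC : (x : Polynomial ℚ) = Polynomial.C cx := by rw [hxv]; simp
      exact const_isUnit hT (hxy.trans (mul_comm x y)) hxC hv1 hv2 hcop
    by_cases hyconst : i' = 0 ∧ j' = 0 ∧ l' = 0
    · right
      obtain ⟨rfl, rfl, rfl⟩ := hyconst
      have hyC : (y : Polynomial ℚ) = Polynomial.C (e0 * cx⁻¹) := by
        rw [hyv]; simp
      exact const_isUnit hT hxy hyC hv1 hv2 hcop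
    · exfalso
      have hnum1 : (((6:ℤ):ℚ) ^ 8 - 17) ^ 1 * ((((6:ℤ):ℚ) - 4) ^ j * (((6:ℤ):ℚ) - 8) ^ l)
          = ((1679599 * 2 ^ j * (-2) ^ l : ℤ) : ℚ) := by
        push_cast; norm_num; try ring
      have hnum1' : (((6:ℤ):ℚ) ^ 8 - 17) ^ 1 * ((((6:ℤ):ℚ) - 4) ^ j' * (((6:ℤ):ℚ) - 8) ^ l')
          = ((1679599 * 2 ^ j' * (-2) ^ l' : ℤ) : ℚ) := by
        push_cast; norm_num; try ring
      have hnum2 : (((1:ℤ):ℚ) ^ 8 - 17) ^ 0 * ((((1:ℤ):ℚ) - 4) ^ j' * (((1:ℤ):ℚ) - 8) ^ l')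
          = (((-3) ^ j' * (-7) ^ l' : ℤ) : ℚ) := by
        push_cast; norm_num; try ring
      have hnum2' : (((1:ℤ):ℚ) ^ 8 - 17) ^ 0 * ((((1:ℤ):ℚ) - 4) ^ j * (((1:ℤ):ℚ) - 8) ^ l)
          = (((-3) ^ j * (-7) ^ l : ℤ) : ℚ) := by
        push_cast; norm_num; try ring
      have hcc : cx * (e0 * cx⁻¹) * 2 ^ (J + L) = 1 := by
        rw [he0]; field_simp
      rcases (by omega : i = 1 ∧ i' = 0 ∨ i = 0 ∧ i' = 1) with ⟨hi1, hi0⟩ | ⟨hi0, hi1⟩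
      · subst hi1; subst hi0
        have e1 : (x : Polynomial ℚ).eval (((6 : ℤ)) : ℚ)
            = cx * ((1679599 * 2 ^ j * (-2) ^ l : ℤ) : ℚ) := by
          rw [hxv, M_eval, hnum1]
        have e2 : (y : Polynomial ℚ).eval (((1 : ℤ)) : ℚ)
            = (e0 * cx⁻¹) * (((-3) ^ j' * (-7) ^ l' : ℤ) : ℚ) := by
          rw [hyv, M_eval, hnum2]
        have hnd : ¬ ((2 : ℤ) ^ (J + L)
            ∣ (1679599 * 2 ^ j * (-2) ^ l) * ((-3) ^ j' * (-7) ^ l')) := by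
          have h := hdyad j l (by omega) (by omega) (by omega)
          rwa [show J - j = j' by omega, show L - l = l' by omega] at h
        exact dyadic_contra (J + L) cx (e0 * cx⁻¹) x.2 y.2 _ _ 6 1 e1 e2 hcc hnd
      · subst hi1; subst hi0
        have e1 : (x : Polynomial ℚ).eval (((1 : ℤ)) : ℚ)
            = cx * (((-3) ^ j * (-7) ^ l : ℤ) : ℚ) := by
          rw [hxv, M_eval, hnum2']
        have e2 : (y : Polynomial ℚ).eval (((6 : ℤ)) : ℚ)
            = (e0 * cx⁻¹) * ((1679599 * 2 ^ j' * (-2) ^ l' : ℤ) : ℚ) := by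
          rw [hyv, M_eval, hnum1']
        have hnd : ¬ ((2 : ℤ) ^ (J + L)
            ∣ ((-3) ^ j * (-7) ^ l) * (1679599 * 2 ^ j' * (-2) ^ l')) := by
          have h := hdyad j' l' (by omega) (by omega) (by omega)
          rw [show J - j' = j by omega, show L - l' = l by omega] at h
          intro hdd; exact h (by rwa [mul_comm] at hdd)
        exact dyadic_contra (J + L) cx (e0 * cx⁻¹) x.2 y.2 _ _ 1 6 e1 e2 hcc hnd


private lemma irred_B : Irreducible (⟨B19, hB_mem⟩ : IntZ) := by
  apply main_irred 2 2 B19 hB_mem (by rw [B19_eq]) 1 0 (-441) (-1088)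
  · rw [B19_eq, M_eval]; push_cast; try norm_num
  · rw [B19_eq, M_eval]; push_cast; try norm_num
  · rw [Int.isCoprime_iff_gcd_eq_one]; decide
  · intro j l hj hl hlt
    interval_cases j <;> interval_cases l <;> first | omega | decide

private lemma irred_A : Irreducible (⟨A19, hA_mem⟩ : IntZ) := by
  apply main_irred 0 0 A19 hA_mem (by rw [A19_eq]) 0 1 (-17) (-16)
  · rw [A19_eq, M_eval]; push_cast; try norm_num
  · rw [A19_eq, M_eval]; push_cast; try norm_num
  · rw [Int.isCoprime_iff_gcd_eq_one]; decide
  · intro j l hj hl hlt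
    omega

private lemma irred_C : Irreducible (⟨C19, hC_mem⟩ : IntZ) := by
  apply main_irred 1 1 C19 hC_mem (by rw [C19_eq]) 0 2 (-136) 717
  · rw [C19_eq, M_eval]; push_cast; try norm_num
  · rw [C19_eq, M_eval]; push_cast; try norm_num
  · rw [Int.isCoprime_iff_gcd_eq_one]; decide
  · intro j l hj hl hlt
    interval_cases j <;> interval_cases l <;> first | omega | decide

private lemma irred_D : Irreducible (⟨D19, hD_mem⟩ : IntZ) := by
  apply main_irred 2 0 D19 hD_mem (by rw [D19_eq]) 2 1 239 (-36)
  · rw [D19_eq, M_eval]; push_cast; try norm_num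
  · rw [D19_eq, M_eval]; push_cast; try norm_num
  · rw [Int.isCoprime_iff_gcd_eq_one]; decide
  · intro j l hj hl hlt
    interval_cases j <;> interval_cases l <;> first | omega | decide

private lemma irred_E : Irreducible (⟨E19, hE_mem⟩ : IntZ) := by
  apply main_irred 0 2 E19 hE_mem (by rw [E19_eq]) 2 1 2151 (-196)
  · rw [E19_eq, M_eval]; push_cast; try norm_num
  · rw [E19_eq, M_eval]; push_cast; try norm_num
  · rw [Int.isCoprime_iff_gcd_eq_one]; decide
  · intro j l hj hl hlt
    interval_cases j <;> interval_cases l <;> first | omega | decide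

private lemma irred_F : Irreducible (⟨F19, hF_mem⟩ : IntZ) := by
  apply main_irred 1 0 F19 hF_mem (by rw [F19_eq]) 2 1 (-239) 24
  · rw [F19_eq, M_eval]; push_cast; try norm_num
  · rw [F19_eq, M_eval]; push_cast; try norm_num
  · rw [Int.isCoprime_iff_gcd_eq_one]; decide
  · intro j l hj hl hlt
    interval_cases j <;> interval_cases l <;> first | omega | decide

private lemma irred_G : Irreducible (⟨G19, hG_mem⟩ : IntZ) := by
  apply main_irred 0 1 G19 hG_mem (by rw [G19_eq]) 2 1 (-717) 56
  · rw [G19_eq, M_eval]; push_cast; try norm_num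
  · rw [G19_eq, M_eval]; push_cast; try norm_num
  · rw [Int.isCoprime_iff_gcd_eq_one]; decide
  · intro j l hj hl hlt
    interval_cases j <;> interval_cases l <;> first | omega | decide

private lemma A19_eq' : A19 = pP := by rw [A19_eq]; norm_num

private lemma not_assoc_deg {x y : IntZ} (hx : (x : Polynomial ℚ) ≠ 0)
    (h : (x : Polynomial ℚ).natDegree ≠ (y : Polynomial ℚ).natDegree) : ¬ Associated x y := by
  rintro ⟨u, hu⟩
  have hval : (x : Polynomial ℚ) * ((u : IntZ) : Polynomial ℚ) = (y : Polynomial ℚ) :=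
    congrArg Subtype.val hu
  have huu : IsUnit ((u : IntZ) : Polynomial ℚ) := (u.isUnit).map IntZ.subtype
  obtain ⟨c, hc, hcu⟩ := Polynomial.isUnit_iff.mp huu
  apply h
  rw [← hval, ← hcu, natDegree_mul_C hc.ne_zero]

private lemma not_assoc_eval {x y : IntZ} (n : ℚ) (hx : (x : Polynomial ℚ).eval n = 0)
    (hy : (y : Polynomial ℚ).eval n ≠ 0) : ¬ Associated x y := by
  rintro ⟨u, hu⟩
  have hval : (x : Polynomial ℚ) * ((u : IntZ) : Polynomial ℚ) = (y : Polynomial ℚ) :=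
    congrArg Subtype.val hu
  apply hy
  rw [← hval, eval_mul, hx, zero_mul]

private lemma deg_A : A19.natDegree = 8 := by
  rw [A19_eq']; unfold pP
  exact natDegree_X_pow_sub_C

private lemma deg_B : B19.natDegree = 12 := by
  rw [B19_eq, CM_natDegree _ (by norm_num)]

private lemma deg_C : C19.natDegree = 10 := by
  rw [C19_eq, CM_natDegree _ (by norm_num)]

private lemma deg_D : D19.natDegree = 10 := by
  rw [D19_eq, CM_natDegree _ (by norm_num)]

private lemma deg_E : E19.natDegree = 10 := by
  rw [E19_eq, CM_natDegree _ (by norm_num)]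

private lemma deg_F : F19.natDegree = 9 := by
  rw [F19_eq, CM_natDegree _ (by norm_num)]

private lemma deg_G : G19.natDegree = 9 := by
  rw [G19_eq, CM_natDegree _ (by norm_num)]

private lemma ne0_A : A19 ≠ 0 := by
  rw [A19_eq']; exact pP_monic.ne_zero

private lemma ne0_D : D19 ≠ 0 := by
  rw [D19_eq]; exact mul_ne_zero (C_ne_zero.mpr (by norm_num)) (M_monic 1 2 0).ne_zero

private lemma ne0_F : F19 ≠ 0 := by
  rw [F19_eq]; exact mul_ne_zero (C_ne_zero.mpr (by norm_num)) (M_monic 1 1 0).ne_zero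

private lemma ne0_G : G19 ≠ 0 := by
  rw [G19_eq]; exact mul_ne_zero (C_ne_zero.mpr (by norm_num)) (M_monic 1 0 1).ne_zero

private lemma ne0_C : C19 ≠ 0 := by
  rw [C19_eq]; exact mul_ne_zero (C_ne_zero.mpr (by norm_num)) (M_monic 1 1 1).ne_zero

private lemma hconst22 : (Polynomial.C (((2:ℚ)^2))⁻¹) * (Polynomial.C (((2:ℚ)^2))⁻¹)
    = Polynomial.C (((2:ℚ)^4))⁻¹ := by
  rw [← C_mul]; norm_num

private lemma hconst1111 : (Polynomial.C (((2:ℚ)^1))⁻¹) * (Polynomial.C (((2:ℚ)^1))⁻¹)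
    * (Polynomial.C (((2:ℚ)^2))⁻¹) = Polynomial.C (((2:ℚ)^4))⁻¹ := by
  rw [← C_mul, ← C_mul]; norm_num

private lemma prod31 : f19 = A19 ^ 3 * B19 := by
  rw [f19_eq, A19_eq', B19_eq]; ring

private lemma prod22 : f19 = A19 ^ 2 * C19 ^ 2 := by
  rw [f19_eq, A19_eq', C19_eq]
  linear_combination (-(pP ^ 4 * qP ^ 2 * rP ^ 2)) * hconst22

private lemma prod211 : f19 = A19 ^ 2 * D19 * E19 := by
  rw [f19_eq, A19_eq', D19_eq, E19_eq]
  linear_combination (-(pP ^ 4 * qP ^ 2 * rP ^ 2)) * hconst22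

private lemma prod1111 : f19 = F19 * G19 * C19 * A19 := by
  rw [f19_eq, A19_eq', F19_eq, G19_eq, C19_eq]
  linear_combination (-(pP ^ 4 * qP ^ 2 * rP ^ 2)) * hconst1111

private lemma evD4 : D19.eval 4 = 0 := by rw [D19_eq, M_eval]; norm_num
private lemma evE4 : E19.eval 4 ≠ 0 := by rw [E19_eq, M_eval]; norm_num
private lemma evF4 : F19.eval 4 = 0 := by rw [F19_eq, M_eval]; norm_num
private lemma evG4 : G19.eval 4 ≠ 0 := by rw [G19_eq, M_eval]; norm_num

private lemma na_AB : ¬ Associated (⟨A19, hA_mem⟩ : IntZ) (⟨B19, hB_mem⟩ : IntZ) :=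
  not_assoc_deg ne0_A (by
    rw [show ((⟨A19, hA_mem⟩ : IntZ) : Polynomial ℚ) = A19 from rfl,
      show ((⟨B19, hB_mem⟩ : IntZ) : Polynomial ℚ) = B19 from rfl, deg_A, deg_B]; omega)

private lemma na_AC : ¬ Associated (⟨A19, hA_mem⟩ : IntZ) (⟨C19, hC_mem⟩ : IntZ) :=
  not_assoc_deg ne0_A (by
    rw [show ((⟨A19, hA_mem⟩ : IntZ) : Polynomial ℚ) = A19 from rfl,
      show ((⟨C19, hC_mem⟩ : IntZ) : Polynomial ℚ) = C19 from rfl, deg_A, deg_C]; omega)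

private lemma na_AD : ¬ Associated (⟨A19, hA_mem⟩ : IntZ) (⟨D19, hD_mem⟩ : IntZ) :=
  not_assoc_deg ne0_A (by
    rw [show ((⟨A19, hA_mem⟩ : IntZ) : Polynomial ℚ) = A19 from rfl,
      show ((⟨D19, hD_mem⟩ : IntZ) : Polynomial ℚ) = D19 from rfl, deg_A, deg_D]; omega)

private lemma na_AE : ¬ Associated (⟨A19, hA_mem⟩ : IntZ) (⟨E19, hE_mem⟩ : IntZ) :=
  not_assoc_deg ne0_A (by
    rw [show ((⟨A19, hA_mem⟩ : IntZ) : Polynomial ℚ) = A19 from rfl,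
      show ((⟨E19, hE_mem⟩ : IntZ) : Polynomial ℚ) = E19 from rfl, deg_A, deg_E]; omega)

private lemma na_DE : ¬ Associated (⟨D19, hD_mem⟩ : IntZ) (⟨E19, hE_mem⟩ : IntZ) :=
  not_assoc_eval 4 evD4 evE4

private lemma na_FG : ¬ Associated (⟨F19, hF_mem⟩ : IntZ) (⟨G19, hG_mem⟩ : IntZ) :=
  not_assoc_eval 4 evF4 evG4

private lemma na_FC : ¬ Associated (⟨F19, hF_mem⟩ : IntZ) (⟨C19, hC_mem⟩ : IntZ) :=
  not_assoc_deg ne0_F (by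
    rw [show ((⟨F19, hF_mem⟩ : IntZ) : Polynomial ℚ) = F19 from rfl,
      show ((⟨C19, hC_mem⟩ : IntZ) : Polynomial ℚ) = C19 from rfl, deg_F, deg_C]; omega)

private lemma na_FA : ¬ Associated (⟨F19, hF_mem⟩ : IntZ) (⟨A19, hA_mem⟩ : IntZ) :=
  not_assoc_deg ne0_F (by
    rw [show ((⟨F19, hF_mem⟩ : IntZ) : Polynomial ℚ) = F19 from rfl,
      show ((⟨A19, hA_mem⟩ : IntZ) : Polynomial ℚ) = A19 from rfl, deg_F, deg_A]; omega)

private lemma na_GC : ¬ Associated (⟨G19, hG_mem⟩ : IntZ) (⟨C19, hC_mem⟩ : IntZ) :=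
  not_assoc_deg ne0_G (by
    rw [show ((⟨G19, hG_mem⟩ : IntZ) : Polynomial ℚ) = G19 from rfl,
      show ((⟨C19, hC_mem⟩ : IntZ) : Polynomial ℚ) = C19 from rfl, deg_G, deg_C]; omega)

private lemma na_GA : ¬ Associated (⟨G19, hG_mem⟩ : IntZ) (⟨A19, hA_mem⟩ : IntZ) :=
  not_assoc_deg ne0_G (by
    rw [show ((⟨G19, hG_mem⟩ : IntZ) : Polynomial ℚ) = G19 from rfl,
      show ((⟨A19, hA_mem⟩ : IntZ) : Polynomial ℚ) = A19 from rfl, deg_G, deg_A]; omega)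

private lemma na_CA : ¬ Associated (⟨C19, hC_mem⟩ : IntZ) (⟨A19, hA_mem⟩ : IntZ) :=
  not_assoc_deg ne0_C (by
    rw [show ((⟨C19, hC_mem⟩ : IntZ) : Polynomial ℚ) = C19 from rfl,
      show ((⟨A19, hA_mem⟩ : IntZ) : Polynomial ℚ) = A19 from rfl, deg_C, deg_A]; omega)

private lemma id31 : (⟨f19, hf_mem⟩ : IntZ) = (⟨A19, hA_mem⟩ : IntZ) ^ 3 * ⟨B19, hB_mem⟩ :=
  Subtype.ext (by
    simp only [MulMemClass.coe_mul, SubmonoidClass.coe_pow]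
    exact prod31)

private lemma id22 : (⟨f19, hf_mem⟩ : IntZ) = (⟨A19, hA_mem⟩ : IntZ) ^ 2 * (⟨C19, hC_mem⟩ : IntZ) ^ 2 :=
  Subtype.ext (by
    simp only [MulMemClass.coe_mul, SubmonoidClass.coe_pow]
    exact prod22)

private lemma id211 : (⟨f19, hf_mem⟩ : IntZ) = (⟨A19, hA_mem⟩ : IntZ) ^ 2 * ⟨D19, hD_mem⟩ * ⟨E19, hE_mem⟩ :=
  Subtype.ext (by
    simp only [MulMemClass.coe_mul, SubmonoidClass.coe_pow]
    exact prod211)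

private lemma id1111 : (⟨f19, hf_mem⟩ : IntZ)
    = (⟨F19, hF_mem⟩ : IntZ) * ⟨G19, hG_mem⟩ * ⟨C19, hC_mem⟩ * ⟨A19, hA_mem⟩ :=
  Subtype.ext (by
    simp only [MulMemClass.coe_mul]
    exact prod1111)

private lemma partition_four (k : List ℕ) (hs : List.Pairwise (· ≥ ·) k)
    (hp : ∀ x ∈ k, 0 < x) (hsum : k.sum = 4) (hne : k ≠ [4]) :
    k = [3, 1] ∨ k = [2, 2] ∨ k = [2, 1, 1] ∨ k = [1, 1, 1, 1] := by
  rcases k with _ | ⟨a, _ | ⟨b, _ | ⟨c, _ | ⟨d, _ | ⟨e, rest⟩⟩⟩⟩⟩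
  · simp at hsum
  · have ha : a = 4 := by simp at hsum; omega
    exact absurd (by rw [ha]) hne
  · simp [List.pairwise_cons] at hs
    simp at hp hsum
    have : (a = 3 ∧ b = 1) ∨ (a = 2 ∧ b = 2) := by omega
    rcases this with ⟨rfl, rfl⟩ | ⟨rfl, rfl⟩
    · tauto
    · tauto
  · simp [List.pairwise_cons] at hs
    simp at hp hsum
    have : a = 2 ∧ b = 1 ∧ c = 1 := by omega
    obtain ⟨rfl, rfl, rfl⟩ := this
    tauto
  · simp [List.pairwise_cons] at hs
    simp at hp hsum
    have : a = 1 ∧ b = 1 ∧ c = 1 ∧ d = 1 := by omega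
    obtain ⟨rfl, rfl, rfl, rfl⟩ := this
    tauto
  · simp at hp hsum
    have h0 : 0 ≤ rest.sum := Nat.zero_le _
    omega

private lemma types_all (k : List ℕ) (hs : List.Pairwise (· ≥ ·) k)
    (hp : ∀ x ∈ k, 0 < x) (hsum : k.sum = 4) (hne : k ≠ [4]) :
    ∃ u : Fin k.length → IntZ,
      (∀ i, Irreducible (u i)) ∧
      (∀ i j, i ≠ j → ¬ Associated (u i) (u j)) ∧
      (⟨f19, hf_mem⟩ : IntZ) = ∏ i, u i ^ k.get i := by
  rcases partition_four k hs hp hsum hne with rfl | rfl | rfl | rfl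
  · refine ⟨![⟨A19, hA_mem⟩, ⟨B19, hB_mem⟩], ?_, ?_, ?_⟩
    · intro i; fin_cases i
      · exact irred_A
      · exact irred_B
    · intro i j hij
      fin_cases i <;> fin_cases j <;> simp_all
      · exact na_AB
      · exact fun h => na_AB h.symm
    · rw [id31]
      simp [Fin.prod_univ_two]
  · refine ⟨![⟨A19, hA_mem⟩, ⟨C19, hC_mem⟩], ?_, ?_, ?_⟩
    · intro i; fin_cases i
      · exact irred_A
      · exact irred_C
    · intro i j hij
      fin_cases i <;> fin_cases j <;> simp_all
      · exact na_AC
      · exact fun h => na_AC h.symm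
    · rw [id22]
      simp [Fin.prod_univ_two]
  · refine ⟨![⟨A19, hA_mem⟩, ⟨D19, hD_mem⟩, ⟨E19, hE_mem⟩], ?_, ?_, ?_⟩
    · intro i; fin_cases i
      · exact irred_A
      · exact irred_D
      · exact irred_E
    · intro i j hij
      fin_cases i <;> fin_cases j <;> simp_all
      · exact na_AD
      · exact na_AE
      · exact fun h => na_AD h.symm
      · exact na_DE
      · exact fun h => na_AE h.symm
      · exact fun h => na_DE h.symm
    · rw [id211]
      simp [Fin.prod_univ_three, mul_assoc]
  · refine ⟨![⟨F19, hF_mem⟩, ⟨G19, hG_mem⟩, ⟨C19, hC_mem⟩, ⟨A19, hA_mem⟩], ?_, ?_, ?_⟩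
    · intro i; fin_cases i
      · exact irred_F
      · exact irred_G
      · exact irred_C
      · exact irred_A
    · intro i j hij
      fin_cases i <;> fin_cases j <;> simp_all
      · exact na_FG
      · exact na_FC
      · exact na_FA
      · exact fun h => na_FG h.symm
      · exact na_GC
      · exact na_GA
      · exact fun h => na_FC h.symm
      · exact fun h => na_GC h.symm
      · exact na_CA
      · exact fun h => na_FA h.symm
      · exact fun h => na_GA h.symm
      · exact fun h => na_CA h.symm
    · rw [id1111]
      simp [Fin.prod_univ_four, mul_assoc, show ((3 : Fin 4) : ℕ) = 3 from rfl]


/-- `f = (x⁸−17)⁴(x−4)²(x−8)²/2⁴ ∈ Int(ℤ)` has, for every partition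
`λ = (k₁, …, k_s)` of `4` with `λ ≠ (4)`, a factorization of type `λ` in `Int(ℤ)`;
explicitly, the four displayed factorizations into irreducibles (with pairwise
non-associated base factors) realize the types `(3,1)`, `(2,2)`, `(2,1,1)` and
`(1,1,1,1)`. -/
theorem stmt19 :
    ∃ (hf : f19 ∈ IntZ) (hA : A19 ∈ IntZ) (hB : B19 ∈ IntZ) (hC : C19 ∈ IntZ)
      (hD : D19 ∈ IntZ) (hE : E19 ∈ IntZ) (hF : F19 ∈ IntZ) (hG : G19 ∈ IntZ),
      -- the general statement: a factorization of every type `λ ≠ (4)`, `λ ⊢ 4`: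
      (∀ k : List ℕ, List.Pairwise (· ≥ ·) k → (∀ x ∈ k, 0 < x) → k.sum = 4 → k ≠ [4] →
        ∃ u : Fin k.length → IntZ,
          (∀ i, Irreducible (u i)) ∧
          (∀ i j, i ≠ j → ¬ Associated (u i) (u j)) ∧
          (⟨f19, hf⟩ : IntZ) = ∏ i, u i ^ k.get i) ∧
      -- all the named factors are irreducible in `Int(ℤ)`:
      Irreducible (⟨A19, hA⟩ : IntZ) ∧ Irreducible (⟨B19, hB⟩ : IntZ) ∧
      Irreducible (⟨C19, hC⟩ : IntZ) ∧ Irreducible (⟨D19, hD⟩ : IntZ) ∧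
      Irreducible (⟨E19, hE⟩ : IntZ) ∧ Irreducible (⟨F19, hF⟩ : IntZ) ∧
      Irreducible (⟨G19, hG⟩ : IntZ) ∧
      -- type (3,1):
      ((⟨f19, hf⟩ : IntZ) = (⟨A19, hA⟩ : IntZ) ^ 3 * ⟨B19, hB⟩ ∧
        ¬ Associated (⟨A19, hA⟩ : IntZ) ⟨B19, hB⟩) ∧
      -- type (2,2):
      ((⟨f19, hf⟩ : IntZ) = (⟨A19, hA⟩ : IntZ) ^ 2 * (⟨C19, hC⟩ : IntZ) ^ 2 ∧
        ¬ Associated (⟨A19, hA⟩ : IntZ) ⟨C19, hC⟩) ∧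
      -- type (2,1,1):
      ((⟨f19, hf⟩ : IntZ) = (⟨A19, hA⟩ : IntZ) ^ 2 * ⟨D19, hD⟩ * ⟨E19, hE⟩ ∧
        ¬ Associated (⟨A19, hA⟩ : IntZ) ⟨D19, hD⟩ ∧
        ¬ Associated (⟨A19, hA⟩ : IntZ) ⟨E19, hE⟩ ∧
        ¬ Associated (⟨D19, hD⟩ : IntZ) ⟨E19, hE⟩) ∧
      -- type (1,1,1,1):
      ((⟨f19, hf⟩ : IntZ) = (⟨F19, hF⟩ : IntZ) * ⟨G19, hG⟩ * ⟨C19, hC⟩ * ⟨A19, hA⟩ ∧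
        ¬ Associated (⟨F19, hF⟩ : IntZ) ⟨G19, hG⟩ ∧
        ¬ Associated (⟨F19, hF⟩ : IntZ) ⟨C19, hC⟩ ∧
        ¬ Associated (⟨F19, hF⟩ : IntZ) ⟨A19, hA⟩ ∧
        ¬ Associated (⟨G19, hG⟩ : IntZ) ⟨C19, hC⟩ ∧
        ¬ Associated (⟨G19, hG⟩ : IntZ) ⟨A19, hA⟩ ∧
        ¬ Associated (⟨C19, hC⟩ : IntZ) ⟨A19, hA⟩) := by
  refine ⟨hf_mem, hA_mem, hB_mem, hC_mem, hD_mem, hE_mem, hF_mem, hG_mem,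
    types_all, irred_A, irred_B, irred_C, irred_D, irred_E, irred_F, irred_G,
    ⟨id31, na_AB⟩, ⟨id22, na_AC⟩, ⟨id211, na_AD, na_AE, na_DE⟩,
    ⟨id1111, na_FG, na_FC, na_FA, na_GC, na_GA, na_CA⟩⟩

end
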